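/- Loosened one-shot Gelfand–Pinsker bound: Under the setup of the one-shot Gelfand–Pinsker theorem (state pmf q_S, channel q_{Y|X,S}, conditional pmf q_{U|S}, function x(u,s), positive integers M, J, and joint pmf q(u,s,x,y) = q(s)q(u|s)1[x = x(u,s)]q(y|x,s)), for every γ > 0 there exists an M-code whose probability of error satisfies P(M̂ ≠ M) ≤ P_q[ log J − i_q(U;S) < γ or i_q(U;Y) − log(M·J) < γ ] + 3·2^{−γ}, where the probability on the right is computed for (U,S,Y) distributed according to q. -/

import Mathlib

open scoped BigOperators

/-- A pmf on a finite type, represented by a nonnegative real-valued function summing to 1. -/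
structure FinPMF (α : Type) [Fintype α] where
  p : α → ℝ
  nonneg : ∀ a, 0 ≤ p a
  sum_eq_one : ∑ a, p a = 1

variable {𝓢 𝓤 𝓧 𝓨 : Type} [Fintype 𝓢] [Fintype 𝓤] [Fintype 𝓧] [Fintype 𝓨]

/-- The joint pmf on `(u, s, y)` induced by
`q(u,s,x,y) = q(s) q(u|s) 1[x = x(u,s)] q(y|x,s)` after marginalizing out the
deterministic `x`. -/
noncomputable def qUSY (qS : FinPMF 𝓢) (qU : 𝓢 → FinPMF 𝓤)
    (W : 𝓧 → 𝓢 → FinPMF 𝓨) (f : 𝓤 → 𝓢 → 𝓧) (u : 𝓤) (s : 𝓢) (y : 𝓨) : ℝ :=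
  qS.p s * (qU s).p u * (W (f u s) s).p y

/-- Information density `i_q(U;S)` evaluated at `(u,s)`. -/
noncomputable def iUS (qS : FinPMF 𝓢) (qU : 𝓢 → FinPMF 𝓤) (u : 𝓤) (s : 𝓢) : ℝ :=
  Real.logb 2 ((qS.p s * (qU s).p u) /
    ((∑ s', qS.p s' * (qU s').p u) * qS.p s))

/-- Information density `i_q(U;Y)` evaluated at `(u,y)`. -/
noncomputable def iUY (qS : FinPMF 𝓢) (qU : 𝓢 → FinPMF 𝓤)
    (W : 𝓧 → 𝓢 → FinPMF 𝓨) (f : 𝓤 → 𝓢 → 𝓧) (u : 𝓤) (y : 𝓨) : ℝ :=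
  Real.logb 2 ((∑ s, qUSY qS qU W f u s y) /
    ((∑ s', qS.p s' * (qU s').p u) * (∑ u', ∑ s', qUSY qS qU W f u' s' y)))

/-- Probability of correct decoding for an `M`-code over the state-dependent channel:
message uniform on `Fin M` independent of `S ~ qS`, `X` generated by the stochastic
encoder from `(m, s)`, `Y` by the channel from `(x, s)`, `M̂` by the stochastic decoder. -/
noncomputable def pCorrectGP (M : ℕ) (qS : FinPMF 𝓢) (W : 𝓧 → 𝓢 → FinPMF 𝓨)
    (enc : Fin M → 𝓢 → FinPMF 𝓧) (dec : 𝓨 → FinPMF (Fin M)) : ℝ :=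
  ∑ m : Fin M, ∑ s : 𝓢, ∑ x : 𝓧, ∑ y : 𝓨,
    (1 / (M : ℝ)) * qS.p s * (enc m s).p x * (W x s).p y * (dec y).p m

open Classical in
/-- Indicator of a proposition, as a real number. -/
noncomputable def ind (P : Prop) : ℝ := if P then 1 else 0

/-- Probability of erroneous decoding `P(M̂ ≠ M)` for an `M`-code over the
state-dependent channel. -/
noncomputable def pErrorGP (M : ℕ) (qS : FinPMF 𝓢) (W : 𝓧 → 𝓢 → FinPMF 𝓨)
    (enc : Fin M → 𝓢 → FinPMF 𝓧) (dec : 𝓨 → FinPMF (Fin M)) : ℝ :=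
  ∑ m : Fin M, ∑ s : 𝓢, ∑ x : 𝓧, ∑ y : 𝓨,
    (1 / (M : ℝ)) * qS.p s * (enc m s).p x * (W x s).p y * (1 - (dec y).p m)

/-!
Random coding with a rejection-sampling encoder. Draw a codebook of `M × J` codewords i.i.d. from
the marginal `q_U`. To send `m` in state `s`, the encoder scans row `m` and accepts the codeword
`u` with probability `2^γ q(u|s) / (J q(u))` if `i(u;s) ≤ log J - γ`, and never otherwise, so
that each step of the scan selects `u` with probability `2^γ q(u|s) 1[i(u;s) ≤ log J - γ] / J`.
The decoder returns any message one of whose codewords has `i(u;y) ≥ log (M J) + γ`.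

Averaged over codebooks, the encoder fails, or selects a codeword that the decoder then misses,
with probability at most `P[error event | s] + exp (-2^γ)`, and `exp (-2^γ) ≤ 2^{-γ}`. A fixed
codeword that is independent of `y` passes the decoding threshold with probability at most
`2^{-γ} / (M J)`, so the union bound over the `(M - 1) J` codewords of the wrong messages costs
another `2^{-γ}`. Some codebook is at least as good as the average.
-/

open Finset Real

lemma ind_pos {P : Prop} (h : P) : ind P = 1 := if_pos h

lemma ind_nonneg (P : Prop) : 0 ≤ ind P := by
  unfold ind; split_ifs <;> norm_num

lemma ind_le_one (P : Prop) : ind P ≤ 1 := by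
  unfold ind; split_ifs <;> norm_num

lemma ind_not_or (P Q : Prop) : ind (¬P ∨ ¬Q) = 1 - ind P + ind P * ind (¬Q) := by
  unfold ind; by_cases P <;> by_cases Q <;> simp [*]

lemma ind_mono {P Q : Prop} (h : P → Q) : ind P ≤ ind Q := by
  unfold ind; by_cases P <;> by_cases Q <;> simp_all

namespace FinPMF

variable {α β : Type} [Fintype α] [Fintype β]

def expect (P : FinPMF α) (F : α → ℝ) : ℝ := ∑ a, P.p a * F a

section expect

variable (P : FinPMF α)

@[simp]
lemma expect_const (c : ℝ) : P.expect (fun _ => c) = c := by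
  rw [expect, ← sum_mul, P.sum_eq_one, one_mul]

lemma expect_add (F G : α → ℝ) :
    P.expect (fun a => F a + G a) = P.expect F + P.expect G := by
  simp only [expect, mul_add, sum_add_distrib]

lemma expect_sub (F G : α → ℝ) : P.expect (fun a => F a - G a) = P.expect F - P.expect G := by
  simp only [expect, mul_sub, sum_sub_distrib]

lemma expect_sum {κ : Type} (t : Finset κ) (F : κ → α → ℝ) :
    P.expect (fun a => ∑ k ∈ t, F k a) = ∑ k ∈ t, P.expect (F k) := by
  simp only [expect, mul_sum]
  exact sum_comm

lemma expect_const_mul (c : ℝ) (F : α → ℝ) : P.expect (fun a => c * F a) = c * P.expect F := by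
  simp only [expect, mul_sum, mul_left_comm]

lemma expect_le_expect_of_pos {F G : α → ℝ} (h : ∀ a, 0 < P.p a → F a ≤ G a) :
    P.expect F ≤ P.expect G := by
  refine sum_le_sum fun a _ => ?_
  rcases (P.nonneg a).eq_or_lt with ha | ha
  · simp [← ha]
  · exact mul_le_mul_of_nonneg_left (h a ha) ha.le

lemma expect_mono {F G : α → ℝ} (h : ∀ a, F a ≤ G a) : P.expect F ≤ P.expect G :=
  P.expect_le_expect_of_pos fun a _ => h a

lemma expect_nonneg {F : α → ℝ} (h : ∀ a, 0 ≤ F a) : 0 ≤ P.expect F :=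
  sum_nonneg fun a _ => mul_nonneg (P.nonneg a) (h a)

lemma expect_le_one {F : α → ℝ} (h : ∀ a, F a ≤ 1) : P.expect F ≤ 1 :=
  (P.expect_mono h).trans_eq (P.expect_const 1)

lemma expect_comm (Q : FinPMF β) (F : α → β → ℝ) :
    P.expect (fun a => Q.expect (F a)) = Q.expect (fun b => P.expect (F · b)) := by
  simp only [expect, mul_sum, mul_left_comm (P.p _)]
  exact sum_comm

lemma exists_le_expect (F : α → ℝ) : ∃ a, F a ≤ P.expect F := by
  have : Nonempty α := by
    by_contra h
    simpa [not_nonempty_iff.mp h] using P.sum_eq_one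
  obtain ⟨a, -, ha⟩ := exists_min_image univ F univ_nonempty
  refine ⟨a, ?_⟩
  calc F a = P.expect (fun _ => F a) := (P.expect_const _).symm
    _ ≤ P.expect F := P.expect_mono fun b => ha b (mem_univ b)

lemma expect_option (P : FinPMF (Option α)) (F : Option α → ℝ) :
    P.expect F = P.p none * F none + ∑ j, P.p (some j) * F (some j) :=
  Fintype.sum_option _

end expect

noncomputable def pure (a : α) : FinPMF α where
  p b := ind (b = a)
  nonneg _ := ind_nonneg _
  sum_eq_one := by classical simp [ind]

noncomputable def bind (P : FinPMF α) (K : α → FinPMF β) : FinPMF β where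
  p b := ∑ a, P.p a * (K a).p b
  nonneg _ := sum_nonneg fun a _ => mul_nonneg (P.nonneg a) ((K a).nonneg _)
  sum_eq_one := by
    rw [sum_comm]
    simp [← mul_sum, FinPMF.sum_eq_one]

noncomputable def map (g : α → β) (P : FinPMF α) : FinPMF β := P.bind fun a => pure (g a)

lemma expect_bind (P : FinPMF α) (K : α → FinPMF β) (F : β → ℝ) :
    (P.bind K).expect F = P.expect fun a => (K a).expect F := by
  simp only [expect, bind, sum_mul, mul_sum, mul_assoc]
  exact sum_comm

lemma expect_pure (a : α) (F : α → ℝ) : (pure a).expect F = F a := by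
  classical simp [expect, pure, ind]

lemma expect_map (g : α → β) (P : FinPMF α) (F : β → ℝ) :
    (P.map g).expect F = P.expect fun a => F (g a) := by
  simp only [map, expect_bind, expect_pure]

noncomputable def pi (P : FinPMF α) (ι : Type) [Fintype ι] [DecidableEq ι] : FinPMF (ι → α) where
  p r := ∏ i, P.p (r i)
  nonneg _ := prod_nonneg fun i _ => P.nonneg _
  sum_eq_one := by simp [← Fintype.prod_sum, P.sum_eq_one]

section pi

variable {ι : Type} [Fintype ι] [DecidableEq ι] (P : FinPMF α)

lemma expect_pi_prod_apply (g : ι → α → ℝ) :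
    (P.pi ι).expect (fun r => ∏ i, g i (r i)) = ∏ i, P.expect (g i) := by
  simp only [expect, pi, ← prod_mul_distrib, Fintype.prod_sum]

lemma expect_pi_prod (A : α → ℝ) :
    (P.pi ι).expect (fun r => ∏ i, A (r i)) = P.expect A ^ Fintype.card ι := by
  rw [expect_pi_prod_apply, prod_const, card_univ]

lemma expect_pi_apply (i : ι) (h : α → ℝ) :
    (P.pi ι).expect (fun r => h (r i)) = P.expect h := by
  simpa [apply_ite P.expect, ite_apply] using
    P.expect_pi_prod_apply fun k => if k = i then h else fun _ => 1

lemma expect_pi_apply_mul_apply {i j : ι} (hij : i ≠ j) (h₁ h₂ : α → ℝ) :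
    (P.pi ι).expect (fun r => h₁ (r i) * h₂ (r j)) = P.expect h₁ * P.expect h₂ := by
  have key := P.expect_pi_prod_apply fun k b =>
    (if k = i then h₁ b else 1) * (if k = j then h₂ b else 1)
  have hfactor : ∀ k,
      P.expect (fun b => (if k = i then h₁ b else 1) * (if k = j then h₂ b else 1)) =
        (if k = i then P.expect h₁ else 1) * (if k = j then P.expect h₂ else 1) := by
    intro k
    by_cases hi : k = i
    · subst hi; simp [hij]
    · split_ifs <;> simp
  rw [prod_congr rfl fun k _ => hfactor k] at key
  simpa only [prod_mul_distrib, prod_ite_eq', mem_univ, if_true] using key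

/-- Each summand involves a coordinate independent of coordinate `i`, and `K (r i)` is a
probability distribution, so each of the `card ι - 1` summands costs at most `ε`. -/
lemma expect_pi_expect_sum_erase_le (K : α → FinPMF β) (H : α → β → ℝ) (i : ι) {ε : ℝ}
    (hH : ∀ y, P.expect (fun b => H b y) ≤ ε) :
    (P.pi ι).expect (fun r => (K (r i)).expect fun y => ∑ i' ∈ univ.erase i, H (r i') y) ≤
      (Fintype.card ι - 1) * ε := by
  have hpair : ∀ i' ∈ univ.erase i, ∀ y,
      (P.pi ι).expect (fun r => (K (r i)).p y * H (r i') y) ≤ (P.bind K).p y * ε := by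
    intro i' hi' y
    rw [P.expect_pi_apply_mul_apply (ne_of_mem_erase hi').symm (fun b => (K b).p y) (H · y)]
    exact mul_le_mul_of_nonneg_left (hH y) ((P.bind K).nonneg y)
  calc (P.pi ι).expect (fun r => (K (r i)).expect fun y => ∑ i' ∈ univ.erase i, H (r i') y)
      = ∑ i' ∈ univ.erase i, ∑ y, (P.pi ι).expect (fun r => (K (r i)).p y * H (r i') y) := by
        simp only [expect_sum]
        exact sum_congr rfl fun i' _ => by rw [← expect_sum]; rfl
    _ ≤ ∑ i' ∈ univ.erase i, ∑ y, (P.bind K).p y * ε :=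
        sum_le_sum fun i' hi' => sum_le_sum fun y _ => hpair i' hi' y
    _ = (Fintype.card ι - 1) * ε := by
        have hcard : 1 ≤ Fintype.card ι := Fintype.card_pos_iff.2 ⟨i⟩
        simp [← sum_mul, FinPMF.sum_eq_one, card_erase_of_mem, Nat.cast_sub hcard]

lemma expect_pi_mul_prod_lt {n : ℕ} (j : Fin n) (h A : α → ℝ) :
    (P.pi (Fin n)).expect (fun r => h (r j) * ∏ i with i < j, A (r i)) =
      P.expect h * P.expect A ^ (j : ℕ) := by
  have key := P.expect_pi_prod_apply fun k b =>
    (if k = j then h b else 1) * (if k < j then A b else 1)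
  have hfactor : ∀ k,
      P.expect (fun b => (if k = j then h b else 1) * (if k < j then A b else 1)) =
        (if k = j then P.expect h else 1) * (if k < j then P.expect A else 1) := by
    intro k
    by_cases hk : k = j
    · subst hk; simp
    · split_ifs <;> simp
  rw [prod_congr rfl fun k _ => hfactor k] at key
  simpa only [prod_mul_distrib, prod_ite_eq', mem_univ, if_true, ← prod_filter, prod_const,
    filter_gt_eq_Iio, Fin.card_Iio] using key

end pi

/-- The index of the first success in independent trials with success probabilities `p i`,
or `none` if every trial fails. -/
noncomputable def firstSuccess {n : ℕ} (p : Fin n → ℝ) (hp : ∀ i, p i ∈ Set.Icc (0 : ℝ) 1) :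
    FinPMF (Option (Fin n)) where
  p o := o.elim (∏ i, (1 - p i)) fun j => p j * ∏ i with i < j, (1 - p i)
  nonneg o := by
    have h : ∀ i, 0 ≤ 1 - p i := fun i => sub_nonneg.2 (hp i).2
    cases o with
    | none => exact prod_nonneg fun i _ => h i
    | some j => exact mul_nonneg (hp j).1 (prod_nonneg fun i _ => h i)
  sum_eq_one := by
    rw [Fintype.sum_option, Option.elim, prod_one_sub_ordered]
    simp

lemma expect_pi_firstSuccess {n : ℕ} (P : FinPMF α) {a : α → ℝ}
    (ha : ∀ b, a b ∈ Set.Icc (0 : ℝ) 1) (h : α → ℝ) :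
    (P.pi (Fin n)).expect (fun r => (firstSuccess (fun i => a (r i)) fun i => ha (r i)).expect
        fun o => o.elim 1 fun j => h (r j)) =
      (1 - P.expect a) ^ n +
        P.expect (fun b => a b * h b) * ∑ j ∈ range n, (1 - P.expect a) ^ j := by
  have hfail : P.expect (fun b => 1 - a b) = 1 - P.expect a := by
    rw [expect_sub, expect_const]
  simp only [expect_option, firstSuccess, Option.elim, mul_one, mul_right_comm _ _ (h _)]
  rw [expect_add, expect_sum, expect_pi_prod P (fun b => 1 - a b), Fintype.card_fin, hfail,
    mul_sum, ← Fin.sum_univ_eq_sum_range fun j =>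
      P.expect (fun b => a b * h b) * (1 - P.expect a) ^ j]
  congr 1
  refine sum_congr rfl fun j _ => ?_
  rw [expect_pi_mul_prod_lt P j (fun b => a b * h b) (fun b => 1 - a b), hfail]

end FinPMF

lemma exp_neg_le_one_sub_add_mul_exp_neg {a c : ℝ} (ha₀ : 0 ≤ a) (ha₁ : a ≤ 1) :
    exp (-(c * a)) ≤ 1 - a + a * exp (-c) := by
  have := convexOn_exp.2 (Set.mem_univ 0) (Set.mem_univ (-c)) (sub_nonneg.2 ha₁) ha₀
    (sub_add_cancel 1 a)
  simp only [smul_eq_mul, mul_zero, exp_zero, mul_one, zero_add] at this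
  rwa [mul_neg, mul_comm, ← neg_mul, neg_mul] at this

/-- With `p = c a / n` the left side is `(1 - p) ^ n + (b / a) (1 - (1 - p) ^ n)`, and
`(1 - p) ^ n ≤ exp (-c a) ≤ 1 - a + a exp (-c)` by convexity of `exp`. -/
lemma one_sub_pow_add_mul_geom_sum_le {n : ℕ} {c a b : ℝ} (hca : c * a ≤ n)
    (hb : 0 ≤ b) (hba : b ≤ a) (ha : a ≤ 1) :
    (1 - c * a / n) ^ n + c * b / n * ∑ j ∈ range n, (1 - c * a / n) ^ j ≤
      1 - a + b + exp (-c) := by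
  rcases (hb.trans hba).eq_or_lt with rfl | ha₀
  · obtain rfl : b = 0 := le_antisymm hba hb
    simp [(exp_pos _).le]
  set p := c * a / n
  set F := (1 - p) ^ n
  set t := b / a
  have hp : p ≤ 1 := div_le_one_of_le₀ hca n.cast_nonneg
  have hcb : c * b / n = p * t := by simp only [p, t]; field_simp
  have hgeom : p * ∑ j ∈ range n, (1 - p) ^ j = 1 - F := by
    have := geom_sum_mul (1 - p) n
    linear_combination -this
  have hF : F ≤ 1 - a + a * exp (-c) :=
    (one_sub_div_pow_le_exp_neg hca).trans (exp_neg_le_one_sub_add_mul_exp_neg ha₀.le ha)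
  have ht₁ : t ≤ 1 := (div_le_one ha₀).2 hba
  have hat : a * t = b := by simp only [t]; field_simp
  rw [hcb, mul_right_comm, hgeom]
  nlinarith [mul_le_mul_of_nonneg_right hF (sub_nonneg.2 ht₁), exp_pos (-c),
    mul_nonneg (mul_nonneg ha₀.le (exp_pos (-c)).le) (div_nonneg hb ha₀.le)]

lemma exp_neg_two_rpow_le (γ : ℝ) : exp (-(2 : ℝ) ^ γ) ≤ (2 : ℝ) ^ (-γ) := by
  rw [exp_neg, rpow_neg zero_le_two]
  exact inv_anti₀ (rpow_pos_of_pos two_pos γ) ((le_add_of_nonneg_right zero_le_one).trans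
    (add_one_le_exp _))

lemma two_rpow_mul_le_of_le_logb_sub {γ x K : ℝ} (hx : 0 ≤ x) (hK : 0 < K)
    (h : γ ≤ logb 2 K - logb 2 x) : 2 ^ γ * x ≤ K := by
  rcases hx.eq_or_lt with rfl | hx
  · simpa using hK.le
  have : logb 2 (2 ^ γ * x) ≤ logb 2 K := by
    rw [logb_mul (rpow_pos_of_pos two_pos γ).ne' hx.ne', logb_rpow two_pos (by norm_num)]
    linarith
  exact (logb_le_logb one_lt_two (mul_pos (rpow_pos_of_pos two_pos γ) hx) hK).1 this

lemma two_rpow_mul_le_of_le_logb_sub' {γ x K : ℝ} (hγ : 0 < γ) (hx : 0 ≤ x) (hK : 1 ≤ K)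
    (h : γ ≤ logb 2 x - logb 2 K) : 2 ^ γ * K ≤ x := by
  refine two_rpow_mul_le_of_le_logb_sub (zero_le_one.trans hK) (hx.lt_of_ne fun hx₀ => ?_) h
  rw [← hx₀, logb_zero] at h
  linarith [logb_nonneg one_lt_two hK]

lemma sum_mul_ind_le_div_mul_sum_le_inv {ι : Type} [Fintype ι] {P q : ι → ℝ}
    (hP : ∀ i, 0 ≤ P i) (hq : ∀ i, 0 ≤ q i) {θ : ℝ} (hθ : 0 < θ) :
    ∑ i, P i * ind (θ ≤ q i / (P i * ∑ j, q j)) ≤ θ⁻¹ := by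
  set Q := ∑ j, q j
  have hQ : 0 ≤ Q := sum_nonneg fun j _ => hq j
  have hterm : ∀ i, P i * ind (θ ≤ q i / (P i * Q)) ≤ q i / (θ * Q) := by
    intro i
    by_cases h : θ ≤ q i / (P i * Q)
    · have hPQ : 0 < P i * Q := by
        refine (mul_nonneg (hP i) hQ).lt_of_ne fun h0 => ?_
        rw [← h0, div_zero] at h
        linarith
      have hQ' : 0 < Q := pos_of_mul_pos_right hPQ (hP i)
      rw [ind, if_pos h, mul_one, le_div_iff₀ (mul_pos hθ hQ')]
      have := (le_div_iff₀ hPQ).1 h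
      linarith
    · rw [ind, if_neg h, mul_zero]
      exact div_nonneg (hq i) (mul_nonneg hθ.le hQ)
  refine (sum_le_sum fun i _ => hterm i).trans ?_
  rw [← sum_div]
  rcases hQ.eq_or_lt with hQ0 | hQ'
  · rw [← hQ0, mul_zero, div_zero]
    exact (inv_pos.2 hθ).le
  · exact (div_mul_cancel_right₀ hQ'.ne' θ).le

lemma pErrorGP_eq (M : ℕ) (qS : FinPMF 𝓢) (W : 𝓧 → 𝓢 → FinPMF 𝓨)
    (enc : Fin M → 𝓢 → FinPMF 𝓧) (dec : 𝓨 → FinPMF (Fin M)) :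
    pErrorGP M qS W enc dec =
      (1 / M : ℝ) * ∑ m, qS.expect fun s =>
        (enc m s).expect fun x => (W x s).expect fun y => 1 - (dec y).p m := by
  simp only [pErrorGP, FinPMF.expect, mul_sum, mul_assoc]

structure GPEnsemble (𝓢 𝓤 𝓧 𝓨 : Type) [Fintype 𝓢] [Fintype 𝓤] [Fintype 𝓧] [Fintype 𝓨] where
  qS : FinPMF 𝓢
  qU : 𝓢 → FinPMF 𝓤
  W : 𝓧 → 𝓢 → FinPMF 𝓨
  f : 𝓤 → 𝓢 → 𝓧
  M : ℕ
  J : ℕ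
  γ : ℝ
  hM : 0 < M
  hJ : 0 < J

namespace GPEnsemble

variable (c : GPEnsemble 𝓢 𝓤 𝓧 𝓨)

noncomputable def margU : FinPMF 𝓤 := c.qS.bind c.qU

def Cover (u : 𝓤) (s : 𝓢) : Prop := c.γ ≤ logb 2 c.J - iUS c.qS c.qU u s

def Pack (u : 𝓤) (y : 𝓨) : Prop := c.γ ≤ iUY c.qS c.qU c.W c.f u y - logb 2 (c.M * c.J)

/-- Chosen so that a draw from `q_U` is accepted with joint probability
`2^γ q(u|s) 1[Cover u s] / J`; the `min` only binds on states of probability zero. -/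
noncomputable def acceptProb (u : 𝓤) (s : 𝓢) : ℝ :=
  ind (c.Cover u s) * min 1 (2 ^ c.γ * (c.qU s).p u / (c.J * c.margU.p u))

lemma acceptProb_mem_Icc (u : 𝓤) (s : 𝓢) : c.acceptProb u s ∈ Set.Icc (0 : ℝ) 1 := by
  have hmin : 0 ≤ min 1 (2 ^ c.γ * (c.qU s).p u / (c.J * c.margU.p u)) :=
    le_min zero_le_one (div_nonneg (mul_nonneg (rpow_nonneg zero_le_two _) ((c.qU s).nonneg u))
      (mul_nonneg c.J.cast_nonneg (c.margU.nonneg u)))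
  exact ⟨mul_nonneg (ind_nonneg _) hmin, mul_le_one₀ (ind_le_one _) hmin (min_le_left _ _)⟩

noncomputable def encoderIndex (r : Fin c.J → 𝓤) (s : 𝓢) : FinPMF (Option (Fin c.J)) :=
  FinPMF.firstSuccess (fun j => c.acceptProb (r j) s) fun j => c.acceptProb_mem_Icc (r j) s

noncomputable def rowEncoder (r : Fin c.J → 𝓤) (s : 𝓢) : FinPMF 𝓧 :=
  (c.encoderIndex r s).map fun o => c.f (r (o.getD ⟨0, c.hJ⟩)) s

open Classical in
noncomputable def decodeIndex (C : Fin c.M → Fin c.J → 𝓤) (y : 𝓨) : Fin c.M :=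
  if h : ∃ m j, c.Pack (C m j) y then h.choose else ⟨0, c.hM⟩

noncomputable def encoder (C : Fin c.M → Fin c.J → 𝓤) (m : Fin c.M) (s : 𝓢) : FinPMF 𝓧 :=
  c.rowEncoder (C m) s

noncomputable def decoder (C : Fin c.M → Fin c.J → 𝓤) (y : 𝓨) : FinPMF (Fin c.M) :=
  FinPMF.pure (c.decodeIndex C y)

noncomputable def rowDist : FinPMF (Fin c.J → 𝓤) := c.margU.pi (Fin c.J)

noncomputable def codebookDist : FinPMF (Fin c.M → Fin c.J → 𝓤) := c.rowDist.pi (Fin c.M)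

noncomputable def condError (C : Fin c.M → Fin c.J → 𝓤) (m : Fin c.M) (s : 𝓢) : ℝ :=
  (c.encoder C m s).expect fun x => (c.W x s).expect fun y => 1 - (c.decoder C y).p m

noncomputable def missProb (u : 𝓤) (s : 𝓢) : ℝ :=
  (c.W (c.f u s) s).expect fun y => ind (¬c.Pack u y)

noncomputable def rowMiss (r : Fin c.J → 𝓤) (s : 𝓢) : ℝ :=
  (c.encoderIndex r s).expect fun o => o.elim 1 fun j => c.missProb (r j) s

noncomputable def falseAlarms (C : Fin c.M → Fin c.J → 𝓤) (m : Fin c.M) (y : 𝓨) : ℝ :=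
  ∑ m' ∈ univ.erase m, ∑ j, ind (c.Pack (C m' j) y)

noncomputable def coverProb (s : 𝓢) : ℝ := (c.qU s).expect fun u => ind (c.Cover u s)

noncomputable def coverMissProb (s : 𝓢) : ℝ :=
  (c.qU s).expect fun u => ind (c.Cover u s) * c.missProb u s

lemma margU_mul_acceptProb {s : 𝓢} (hs : 0 < c.qS.p s) (u : 𝓤) :
    c.margU.p u * c.acceptProb u s = 2 ^ c.γ / c.J * ((c.qU s).p u * ind (c.Cover u s)) := by
  by_cases hC : c.Cover u s
  swap
  · simp [acceptProb, ind, hC]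
  rcases ((c.qU s).nonneg u).eq_or_lt with hq | hq
  · simp [acceptProb, ← hq]
  have hJ : (0 : ℝ) < c.J := Nat.cast_pos.2 c.hJ
  have hU : 0 < c.margU.p u :=
    (mul_pos hs hq).trans_le (single_le_sum (f := fun s' => c.qS.p s' * (c.qU s').p u)
      (fun s' _ => mul_nonneg (c.qS.nonneg s') ((c.qU s').nonneg u)) (mem_univ s))
  have hiUS : iUS c.qS c.qU u s = logb 2 ((c.qU s).p u / c.margU.p u) := by
    rw [iUS, mul_comm (c.qS.p s), mul_div_mul_right _ _ hs.ne']
    rfl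
  have hratio : 2 ^ c.γ * ((c.qU s).p u / c.margU.p u) ≤ c.J :=
    two_rpow_mul_le_of_le_logb_sub (div_nonneg hq.le hU.le) hJ (hiUS ▸ hC)
  have hle : 2 ^ c.γ * (c.qU s).p u / (c.J * c.margU.p u) ≤ 1 := by
    rw [div_le_one (mul_pos hJ hU)]
    rw [mul_div_assoc', div_le_iff₀ hU] at hratio
    linarith
  rw [acceptProb, ind_pos hC, one_mul, mul_one, min_eq_right hle]
  field_simp

lemma expect_margU_acceptProb_mul {s : 𝓢} (hs : 0 < c.qS.p s) (h : 𝓤 → ℝ) :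
    c.margU.expect (fun u => c.acceptProb u s * h u) =
      2 ^ c.γ / c.J * (c.qU s).expect fun u => ind (c.Cover u s) * h u := by
  simp only [FinPMF.expect, mul_sum, ← mul_assoc, c.margU_mul_acceptProb hs]

lemma expect_margU_ind_pack_le (hγ : 0 < c.γ) (y : 𝓨) :
    c.margU.expect (fun u => ind (c.Pack u y)) ≤ ((2 : ℝ) ^ c.γ * (c.M * c.J))⁻¹ := by
  have hMJ : (1 : ℝ) ≤ c.M * c.J := by
    exact_mod_cast Nat.one_le_iff_ne_zero.2 (Nat.mul_ne_zero c.hM.ne' c.hJ.ne')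
  have hqUY : ∀ u, 0 ≤ ∑ s, qUSY c.qS c.qU c.W c.f u s y := fun u => sum_nonneg fun s _ =>
    mul_nonneg (mul_nonneg (c.qS.nonneg s) ((c.qU s).nonneg u)) ((c.W _ s).nonneg y)
  refine (c.margU.expect_mono fun u => ind_mono fun hP => ?_).trans
    (sum_mul_ind_le_div_mul_sum_le_inv c.margU.nonneg hqUY
      (mul_pos (rpow_pos_of_pos two_pos _) (by linarith)))
  exact two_rpow_mul_le_of_le_logb_sub' hγ
    (div_nonneg (hqUY u) (mul_nonneg (c.margU.nonneg u) (sum_nonneg fun u' _ => hqUY u'))) hMJ hP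

lemma missProb_mem_Icc (u : 𝓤) (s : 𝓢) : c.missProb u s ∈ Set.Icc (0 : ℝ) 1 :=
  ⟨FinPMF.expect_nonneg _ fun _ => ind_nonneg _, FinPMF.expect_le_one _ fun _ => ind_le_one _⟩

lemma falseAlarms_nonneg (C : Fin c.M → Fin c.J → 𝓤) (m : Fin c.M) (y : 𝓨) :
    0 ≤ c.falseAlarms C m y :=
  sum_nonneg fun _ _ => sum_nonneg fun _ _ => ind_nonneg _

lemma one_sub_decoder_le (C : Fin c.M → Fin c.J → 𝓤) (m : Fin c.M) (j : Fin c.J) (y : 𝓨) :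
    1 - (c.decoder C y).p m ≤ ind (¬c.Pack (C m j) y) + c.falseAlarms C m y := by
  show 1 - ind (m = c.decodeIndex C y) ≤ _
  have hFA := c.falseAlarms_nonneg C m y
  by_cases hpass : c.Pack (C m j) y
  swap
  · rw [ind_pos hpass]
    linarith [ind_nonneg (m = c.decodeIndex C y)]
  by_cases hdec : m = c.decodeIndex C y
  · rw [ind_pos hdec]
    linarith [ind_nonneg (¬c.Pack (C m j) y)]
  have hex : ∃ m j, c.Pack (C m j) y := ⟨m, j, hpass⟩
  obtain ⟨j', hj'⟩ : ∃ j', c.Pack (C (c.decodeIndex C y) j') y := by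
    rw [decodeIndex, dif_pos hex]
    exact hex.choose_spec
  have : 1 ≤ c.falseAlarms C m y := by
    calc (1 : ℝ) = ind (c.Pack (C (c.decodeIndex C y) j') y) := (ind_pos hj').symm
      _ ≤ ∑ j, ind (c.Pack (C (c.decodeIndex C y) j) y) :=
        single_le_sum (f := fun j => ind (c.Pack (C (c.decodeIndex C y) j) y))
          (fun _ _ => ind_nonneg _) (mem_univ j')
      _ ≤ c.falseAlarms C m y :=
        single_le_sum (f := fun m' => ∑ j, ind (c.Pack (C m' j) y))
          (fun _ _ => sum_nonneg fun _ _ => ind_nonneg _)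
          (mem_erase.2 ⟨Ne.symm hdec, mem_univ _⟩)
  linarith [ind_nonneg (¬c.Pack (C m j) y), ind_nonneg (m = c.decodeIndex C y)]

lemma condError_le (C : Fin c.M → Fin c.J → 𝓤) (m : Fin c.M) (s : 𝓢) :
    c.condError C m s ≤
      c.rowMiss (C m) s + ((c.rowEncoder (C m) s).bind (c.W · s)).expect (c.falseAlarms C m) := by
  rw [condError, encoder, rowMiss, FinPMF.expect_bind, rowEncoder, FinPMF.expect_map,
    FinPMF.expect_map, ← FinPMF.expect_add]
  refine FinPMF.expect_mono _ fun o => ?_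
  cases o with
  | none =>
    calc _ ≤ (c.W _ s).expect (fun y => 1 + c.falseAlarms C m y) :=
          FinPMF.expect_mono _ fun y => by
            linarith [(c.decoder C y).nonneg m, c.falseAlarms_nonneg C m y]
      _ = _ := by rw [FinPMF.expect_add, FinPMF.expect_const]; rfl
  | some j =>
    simp only [Option.elim, Option.getD_some, missProb]
    rw [← FinPMF.expect_add]
    exact FinPMF.expect_mono _ fun y => c.one_sub_decoder_le C m j y

lemma expect_rowMiss_le {s : 𝓢} (hs : 0 < c.qS.p s) :
    c.rowDist.expect (c.rowMiss · s) ≤ 1 - c.coverProb s + c.coverMissProb s + exp (-2 ^ c.γ) := by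
  have hacc : c.margU.expect (fun u => c.acceptProb u s) = 2 ^ c.γ * c.coverProb s / c.J := by
    simpa [div_mul_eq_mul_div, coverProb] using c.expect_margU_acceptProb_mul hs fun _ => 1
  have hmiss : c.margU.expect (fun u => c.acceptProb u s * c.missProb u s) =
      2 ^ c.γ * c.coverMissProb s / c.J := by
    rw [c.expect_margU_acceptProb_mul hs, div_mul_eq_mul_div]
    rfl
  have hcover : 2 ^ c.γ * c.coverProb s ≤ c.J := by
    have := c.margU.expect_le_one fun u => (c.acceptProb_mem_Icc u s).2
    rwa [hacc, div_le_one (Nat.cast_pos.2 c.hJ)] at this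
  refine (c.margU.expect_pi_firstSuccess (fun u => c.acceptProb_mem_Icc u s)
    fun u => c.missProb u s).trans_le ?_
  rw [hacc, hmiss]
  exact one_sub_pow_add_mul_geom_sum_le hcover
    (FinPMF.expect_nonneg _ fun u => mul_nonneg (ind_nonneg _) (c.missProb_mem_Icc u s).1)
    (FinPMF.expect_mono _ fun u =>
      mul_le_of_le_one_right (ind_nonneg _) (c.missProb_mem_Icc u s).2)
    (FinPMF.expect_le_one _ fun _ => ind_le_one _)

lemma expect_falseAlarms_le (hγ : 0 < c.γ) (m : Fin c.M) (s : 𝓢) :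
    c.codebookDist.expect (fun C =>
        ((c.rowEncoder (C m) s).bind (c.W · s)).expect (c.falseAlarms C m)) ≤ 2 ^ (-c.γ) := by
  have hrow : ∀ y, c.rowDist.expect (fun r => ∑ j, ind (c.Pack (r j) y)) ≤
      c.J * ((2 : ℝ) ^ c.γ * (c.M * c.J))⁻¹ := by
    intro y
    rw [FinPMF.expect_sum]
    calc ∑ j, c.rowDist.expect (fun r => ind (c.Pack (r j) y))
        = ∑ _j : Fin c.J, c.margU.expect fun u => ind (c.Pack u y) :=
          sum_congr rfl fun j _ => FinPMF.expect_pi_apply _ j fun u => ind (c.Pack u y)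
      _ ≤ ∑ _j : Fin c.J, ((2 : ℝ) ^ c.γ * (c.M * c.J))⁻¹ :=
          sum_le_sum fun _ _ => c.expect_margU_ind_pack_le hγ y
      _ = c.J * ((2 : ℝ) ^ c.γ * (c.M * c.J))⁻¹ := by simp
  refine (c.rowDist.expect_pi_expect_sum_erase_le (fun r => (c.rowEncoder r s).bind (c.W · s))
    (fun r y => ∑ j, ind (c.Pack (r j) y)) m hrow).trans ?_
  have hM : (0 : ℝ) < c.M := Nat.cast_pos.2 c.hM
  have hJ : (0 : ℝ) < c.J := Nat.cast_pos.2 c.hJ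
  calc ((Fintype.card (Fin c.M) : ℝ) - 1) * (c.J * ((2 : ℝ) ^ c.γ * (c.M * c.J))⁻¹)
      = (1 - 1 / c.M) * 2 ^ (-c.γ) := by
        rw [Fintype.card_fin, rpow_neg zero_le_two]
        field_simp
    _ ≤ 2 ^ (-c.γ) :=
        mul_le_of_le_one_left (rpow_nonneg zero_le_two _) (sub_le_self _ (by positivity))

lemma expect_condError_le (hγ : 0 < c.γ) {s : 𝓢} (hs : 0 < c.qS.p s) (m : Fin c.M) :
    c.codebookDist.expect (c.condError · m s) ≤
      1 - c.coverProb s + c.coverMissProb s + 2 * 2 ^ (-c.γ) := by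
  calc c.codebookDist.expect (c.condError · m s)
      ≤ c.codebookDist.expect (fun C => c.rowMiss (C m) s +
          ((c.rowEncoder (C m) s).bind (c.W · s)).expect (c.falseAlarms C m)) :=
        FinPMF.expect_mono _ fun C => c.condError_le C m s
    _ = c.rowDist.expect (c.rowMiss · s) + c.codebookDist.expect (fun C =>
          ((c.rowEncoder (C m) s).bind (c.W · s)).expect (c.falseAlarms C m)) := by
        rw [FinPMF.expect_add, codebookDist, FinPMF.expect_pi_apply _ m (c.rowMiss · s)]
    _ ≤ 1 - c.coverProb s + c.coverMissProb s + exp (-2 ^ c.γ) + 2 ^ (-c.γ) :=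
        add_le_add (c.expect_rowMiss_le hs) (c.expect_falseAlarms_le hγ m s)
    _ ≤ _ := by linarith [exp_neg_two_rpow_le c.γ]

lemma expect_pErrorGP_le (hγ : 0 < c.γ) :
    c.codebookDist.expect (fun C => pErrorGP c.M c.qS c.W (c.encoder C) (c.decoder C)) ≤
      c.qS.expect (fun s => 1 - c.coverProb s + c.coverMissProb s) + 2 * 2 ^ (-c.γ) := by
  have hM : (0 : ℝ) < c.M := Nat.cast_pos.2 c.hM
  calc c.codebookDist.expect (fun C => pErrorGP c.M c.qS c.W (c.encoder C) (c.decoder C))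
      = 1 / c.M * ∑ m, c.qS.expect fun s => c.codebookDist.expect (c.condError · m s) := by
        simp only [pErrorGP_eq, FinPMF.expect_const_mul, FinPMF.expect_sum,
          FinPMF.expect_comm c.codebookDist c.qS]
        rfl
    _ ≤ 1 / c.M * ∑ _m : Fin c.M,
          c.qS.expect (fun s => 1 - c.coverProb s + c.coverMissProb s + 2 * 2 ^ (-c.γ)) := by
        gcongr with m
        exact c.qS.expect_le_expect_of_pos fun s hs => c.expect_condError_le hγ hs m
    _ = _ := by
        rw [FinPMF.expect_add, FinPMF.expect_const, sum_const, card_univ, Fintype.card_fin,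
          nsmul_eq_mul]
        field_simp

lemma expect_errorEvent_eq (s : 𝓢) :
    (c.qU s).expect (fun u => (c.W (c.f u s) s).expect fun y =>
        ind (¬c.Cover u s ∨ ¬c.Pack u y)) =
      1 - c.coverProb s + c.coverMissProb s := by
  simp only [ind_not_or, FinPMF.expect_add, FinPMF.expect_sub, FinPMF.expect_const,
    FinPMF.expect_const_mul]
  rfl

lemma sum_qUSY_mul_ind_eq :
    ∑ u, ∑ s, ∑ y, qUSY c.qS c.qU c.W c.f u s y *
        ind (logb 2 c.J - iUS c.qS c.qU u s < c.γ ∨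
          iUY c.qS c.qU c.W c.f u y - logb 2 (c.M * c.J) < c.γ) =
      c.qS.expect (fun s => 1 - c.coverProb s + c.coverMissProb s) := by
  simp only [← c.expect_errorEvent_eq, Cover, Pack, not_le, FinPMF.expect, qUSY, mul_sum,
    mul_assoc]
  exact sum_comm

end GPEnsemble

/-- Loosened one-shot Gelfand–Pinsker bound: for every `γ > 0` there is an `M`-code with
`P(M̂ ≠ M) ≤ P_q[log J − i_q(U;S) < γ  or  i_q(U;Y) − log (M J) < γ] + 3·2^{−γ}`. -/
theorem oneShot_gelfand_pinsker_loosened (qS : FinPMF 𝓢) (W : 𝓧 → 𝓢 → FinPMF 𝓨)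
    (qU : 𝓢 → FinPMF 𝓤) (f : 𝓤 → 𝓢 → 𝓧) (M J : ℕ) (hM : 0 < M) (hJ : 0 < J)
    (γ : ℝ) (hγ : 0 < γ) :
    ∃ (enc : Fin M → 𝓢 → FinPMF 𝓧) (dec : 𝓨 → FinPMF (Fin M)),
      pErrorGP M qS W enc dec ≤
        (∑ u : 𝓤, ∑ s : 𝓢, ∑ y : 𝓨, qUSY qS qU W f u s y *
          ind (Real.logb 2 (J : ℝ) - iUS qS qU u s < γ ∨
               iUY qS qU W f u y - Real.logb 2 ((M : ℝ) * (J : ℝ)) < γ))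
        + 3 * (2 : ℝ) ^ (-γ) := by
  let c : GPEnsemble 𝓢 𝓤 𝓧 𝓨 := ⟨qS, qU, W, f, M, J, γ, hM, hJ⟩
  obtain ⟨C, hC⟩ := c.codebookDist.exists_le_expect fun C =>
    pErrorGP M qS W (c.encoder C) (c.decoder C)
  refine ⟨c.encoder C, c.decoder C, ?_⟩
  rw [c.sum_qUSY_mul_ind_eq]
  linarith [c.expect_pErrorGP_le hγ, rpow_pos_of_pos two_pos (-γ)]
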